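/- (Point-mass limit, one-dimensional case of Corollary, part i.) For every θ_s ∈ ℝ and every bounded continuous 2π-periodic function g : ℝ → ℝ, the WOU conditional density concentrates at θ_s as t → 0⁺: ∫_{−π}^{π} p_t(θ | θ_s)·g(θ) dθ → g(θ_s) as t → 0⁺. -/

import Mathlib

open MeasureTheory Real

/-- Centered Gaussian density with variance `v` on `ℝ`. -/
noncomputable def gaussDens (v x : ℝ) : ℝ :=
  (Real.sqrt (2 * Real.pi * v))⁻¹ * Real.exp (-(x ^ 2) / (2 * v))

/-- Wrapped normal density `f_WN(θ; μ, v)`. -/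
noncomputable def fWN (μ v θ : ℝ) : ℝ :=
  ∑' k : ℤ, gaussDens v (θ - μ + 2 * (k : ℝ) * Real.pi)

/-- Winding-number weights `w_k(θ)` with stationary variance `v∞ = σ²/(2α)`. -/
noncomputable def wnWeight (α μ σ : ℝ) (k : ℤ) (θ : ℝ) : ℝ :=
  gaussDens (σ ^ 2 / (2 * α)) (θ - μ + 2 * (k : ℝ) * Real.pi) / fWN μ (σ ^ 2 / (2 * α)) θ

/-- Conditional mean `μ_t^m(θ_s) = μ + e^{−αt}(θ_s − μ + 2mπ)`. -/
noncomputable def wouMean (α μ : ℝ) (t : ℝ) (m : ℤ) (θs : ℝ) : ℝ :=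
  μ + Real.exp (-(α * t)) * (θs - μ + 2 * (m : ℝ) * Real.pi)

/-- Conditional variance `γ_t = σ²(1 − e^{−2αt})/(2α)`. -/
noncomputable def wouVar (α σ t : ℝ) : ℝ :=
  σ ^ 2 * (1 - Real.exp (-(2 * α * t))) / (2 * α)

/-- The WOU conditional density `p_t(θ | θ_s)`. -/
noncomputable def pWOU (α μ σ t θ θs : ℝ) : ℝ :=
  ∑' m : ℤ, wnWeight α μ σ m θs * fWN (wouMean α μ t m θs) (wouVar α σ t) θ

/-! For a `2π`-periodic bounded `g`, unfolding the sum over translates turns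
`∫_{-π}^{π} f_WN(θ; m, v) g(θ) dθ` into `∫ g d𝒩(m, v)`, so
`∫_{-π}^{π} p_t(θ | θ_s) g(θ) dθ = ∑ₘ wₘ(θ_s) ∫ g d𝒩(μ_t^m(θ_s), γ_t)`.
As `t → 0⁺` we have `μ_t^m(θ_s) → θ_s + 2mπ` and `γ_t → 0`; writing `𝒩(m, v)` as the image of
`𝒩(0, 1)` under `z ↦ m + √v z`, each Gaussian integral tends to `g(θ_s + 2mπ) = g(θ_s)` by
dominated convergence. The weights `wₘ(θ_s)` sum to `1`, and dominated convergence for the series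
gives the limit `g(θ_s)`. -/

open Filter Set Topology ProbabilityTheory
open scoped ENNReal NNReal

section Periodization

variable {E : Type*} [NormedAddCommGroup E] {T : ℝ}

theorem tsum_zmultiples_eq_tsum_int {M : Type*} [AddCommMonoid M] [TopologicalSpace M]
    (hT : T ≠ 0) (F : ℝ → M) :
    ∑' g : AddSubgroup.zmultiples T, F g = ∑' k : ℤ, F (k • T) :=
  ((AddMonoidHom.ofInjective (f := zmultiplesHom ℝ T)
    fun a b h => by simpa [hT] using h).toEquiv.tsum_eq (F ∘ (↑))).symm

theorem lintegral_eq_tsum_setLIntegral_Ioc_add_zsmul (hT : 0 < T) (a : ℝ) (f : ℝ → ℝ≥0∞) :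
    ∫⁻ x, f x = ∑' k : ℤ, ∫⁻ x in Ioc a (a + T), f (x + k • T) := by
  rw [(isAddFundamentalDomain_Ioc hT a volume).lintegral_eq_tsum'' f,
    ← tsum_zmultiples_eq_tsum_int hT.ne' (fun c => ∫⁻ x in Ioc a (a + T), f (x + c))]
  simp [AddSubgroup.vadd_def, vadd_eq_add, add_comm]

theorem integral_eq_tsum_setIntegral_Ioc_add_zsmul [NormedSpace ℝ E] (hT : 0 < T) (a : ℝ)
    {f : ℝ → E} (hf : Integrable f) :
    ∫ x, f x = ∑' k : ℤ, ∫ x in Ioc a (a + T), f (x + k • T) := by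
  rw [(isAddFundamentalDomain_Ioc hT a volume).integral_eq_tsum'' f hf,
    ← tsum_zmultiples_eq_tsum_int hT.ne' (fun c => ∫ x in Ioc a (a + T), f (x + c))]
  simp [AddSubgroup.vadd_def, vadd_eq_add, add_comm]

theorem integrableOn_Ioc_tsum_comp_add_zsmul (hT : 0 < T) (a : ℝ) {f : ℝ → E}
    (hf : Integrable f) (hsum : ∀ x, Summable fun k : ℤ => f (x + k • T)) :
    IntegrableOn (fun x => ∑' k : ℤ, f (x + k • T)) (Ioc a (a + T)) := by
  have hmeas (k : ℤ) : AEStronglyMeasurable (fun x => f (x + k • T)) :=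
    (hf.comp_add_right (k • T)).aestronglyMeasurable
  refine ⟨aestronglyMeasurable_of_tendsto_ae atTop
    (f := fun (s : Finset ℤ) x => ∑ k ∈ s, f (x + k • T))
    (fun s => (Finset.aestronglyMeasurable_fun_sum s fun k _ => hmeas k).restrict)
    (ae_of_all _ fun x => (hsum x).hasSum), ?_⟩
  calc ∫⁻ x in Ioc a (a + T), ‖∑' k : ℤ, f (x + k • T)‖ₑ
      ≤ ∫⁻ x in Ioc a (a + T), ∑' k : ℤ, ‖f (x + k • T)‖ₑ :=
        lintegral_mono fun x => enorm_tsum_le_tsum_enorm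
    _ = ∫⁻ x, ‖f x‖ₑ := by
        rw [lintegral_tsum fun k => (hmeas k).enorm.restrict,
          lintegral_eq_tsum_setLIntegral_Ioc_add_zsmul hT a]
    _ < ∞ := hf.hasFiniteIntegral

theorem integral_Ioc_tsum_comp_add_zsmul [NormedSpace ℝ E] (hT : 0 < T) (a : ℝ) {f : ℝ → E}
    (hf : Integrable f) :
    ∫ x in Ioc a (a + T), ∑' k : ℤ, f (x + k • T) = ∫ x, f x := by
  have hfin : ∑' k : ℤ, ∫⁻ x in Ioc a (a + T), ‖f (x + k • T)‖ₑ ≠ ∞ := by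
    rw [← lintegral_eq_tsum_setLIntegral_Ioc_add_zsmul hT a (fun x => ‖f x‖ₑ)]
    exact hf.hasFiniteIntegral.ne
  rw [integral_tsum (fun k => (hf.comp_add_right (k • T)).aestronglyMeasurable.restrict) hfin,
    ← integral_eq_tsum_setIntegral_Ioc_add_zsmul hT a hf]

end Periodization

lemma abs_integral_le_of_forall_abs_le {α : Type*} [MeasurableSpace α] {ν : Measure α}
    [IsProbabilityMeasure ν] {f : α → ℝ} {C : ℝ} (hC : ∀ x, |f x| ≤ C) :
    |∫ x, f x ∂ν| ≤ C := by
  simpa using norm_integral_le_of_norm_le_const (μ := ν) (f := f) (ae_of_all _ hC)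

lemma gaussianReal_eq_map_add_mul (μ : ℝ) (v : ℝ≥0) :
    gaussianReal μ v = (gaussianReal 0 1).map (fun z => μ + √v * z) := by
  have hcomp : (fun z => μ + √v * z) = (· + μ) ∘ (√v * ·) := by ext z; simp [add_comm]
  rw [hcomp, ← Measure.map_map (by fun_prop) (by fun_prop), gaussianReal_map_const_mul,
    gaussianReal_map_add_const]
  congr 1
  · simp
  · ext; simp

theorem tendsto_integral_gaussianReal {E : Type*} [NormedAddCommGroup E] [NormedSpace ℝ E]
    [CompleteSpace E] {ι : Type*} {l : Filter ι} [l.IsCountablyGenerated] {m : ι → ℝ}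
    {v : ι → ℝ≥0} {m₀ : ℝ} (hm : Tendsto m l (𝓝 m₀)) (hv : Tendsto v l (𝓝 0)) {g : ℝ → E}
    (hg : Continuous g) {C : ℝ} (hC : ∀ x, ‖g x‖ ≤ C) :
    Tendsto (fun i => ∫ x, g x ∂gaussianReal (m i) (v i)) l (𝓝 (g m₀)) := by
  have hrepr (a : ℝ) (s : ℝ≥0) :
      ∫ x, g x ∂gaussianReal a s = ∫ z, g (a + √s * z) ∂gaussianReal 0 1 := by
    rw [gaussianReal_eq_map_add_mul, integral_map (by fun_prop) hg.aestronglyMeasurable]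
  have hdirac : g m₀ = ∫ x, g x ∂gaussianReal m₀ 0 := by
    rw [gaussianReal_zero_var, integral_dirac]
  simp_rw [hdirac, hrepr]
  refine tendsto_integral_filter_of_norm_le_const
    (Eventually.of_forall fun i => (hg.comp (by fun_prop)).aestronglyMeasurable)
    ⟨C, Eventually.of_forall fun i => ae_of_all _ fun z => hC _⟩ (ae_of_all _ fun z => ?_)
  have hsqrt : Tendsto (fun i => √(v i : ℝ)) l (𝓝 √((0 : ℝ≥0) : ℝ)) :=
    ((continuous_sqrt.comp NNReal.continuous_coe).tendsto 0).comp hv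
  exact (hg.tendsto _).comp (hm.add (hsqrt.mul_const z))

theorem summable_gaussianPDFReal_add_zsmul {v : ℝ≥0} (hv : v ≠ 0) (μ x : ℝ) {T : ℝ}
    (hT : T ≠ 0) : Summable fun k : ℤ => gaussianPDFReal μ v (x + k • T) := by
  -- `(x + kT - μ)² / (2v) = π (k + (x - μ) / T)² · T² / (2πv)`: a Hurwitz kernel summand.
  refine ((HurwitzKernelBounds.summable_f_int 0 ((x - μ) / T)
    (t := T ^ 2 / (2 * π * v)) (by positivity)).mul_left (√(2 * π * v))⁻¹).congr fun k => ?_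
  simp only [HurwitzKernelBounds.f_int, pow_zero, one_mul, gaussianPDFReal, zsmul_eq_mul]
  congr 2
  field_simp
  ring

lemma gaussDens_add_two_mul_pi {v : ℝ} (hv : 0 ≤ v) (μ θ : ℝ) (k : ℤ) :
    gaussDens v (θ - μ + 2 * k * π) = gaussianPDFReal μ v.toNNReal (θ + k • (2 * π)) := by
  simp only [gaussDens, gaussianPDFReal, Real.coe_toNNReal _ hv, zsmul_eq_mul]
  ring_nf

lemma fWN_eq_tsum_gaussianPDFReal {v : ℝ} (hv : 0 ≤ v) (μ θ : ℝ) :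
    fWN μ v θ = ∑' k : ℤ, gaussianPDFReal μ v.toNNReal (θ + k • (2 * π)) :=
  tsum_congr (gaussDens_add_two_mul_pi hv μ θ)

lemma fWN_pos {v : ℝ} (hv : 0 < v) (μ θ : ℝ) : 0 < fWN μ v θ := by
  have hv' : v.toNNReal ≠ 0 := by simpa using hv
  rw [fWN_eq_tsum_gaussianPDFReal hv.le]
  exact (summable_gaussianPDFReal_add_zsmul hv' μ θ two_pi_pos.ne').tsum_pos
    (fun k => gaussianPDFReal_nonneg _ _ _) 0 (gaussianPDFReal_pos _ _ _ hv')

section WrappedNormal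

variable {v : ℝ} {g : ℝ → ℝ}

lemma fWN_mul_eq_tsum (hv : 0 ≤ v) (μ θ : ℝ) (hg : Function.Periodic g (2 * π)) :
    fWN μ v θ * g θ =
      ∑' k : ℤ, gaussianPDFReal μ v.toNNReal (θ + k • (2 * π)) * g (θ + k • (2 * π)) := by
  rw [fWN_eq_tsum_gaussianPDFReal hv, ← tsum_mul_right]
  exact tsum_congr fun k => by rw [hg.zsmul k θ]

lemma integrable_gaussianPDFReal_mul (μ : ℝ) (v : ℝ≥0) (hgm : AEStronglyMeasurable g)
    {C : ℝ} (hC : ∀ x, |g x| ≤ C) : Integrable fun x => gaussianPDFReal μ v x * g x :=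
  (integrable_gaussianPDFReal μ v).mul_bdd hgm (ae_of_all _ hC)

lemma Ioc_neg_pi_pi_eq : Ioc (-π) π = Ioc (-π) (-π + 2 * π) := by ring_nf

theorem integrableOn_fWN_mul (hv : 0 < v) (μ : ℝ) (hg : Function.Periodic g (2 * π))
    (hgm : AEStronglyMeasurable g) {C : ℝ} (hC : ∀ x, |g x| ≤ C) :
    IntegrableOn (fun θ => fWN μ v θ * g θ) (Ioc (-π) π) := by
  have hv' : v.toNNReal ≠ 0 := by simpa using hv
  simp only [fWN_mul_eq_tsum hv.le _ _ hg, Ioc_neg_pi_pi_eq]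
  refine integrableOn_Ioc_tsum_comp_add_zsmul two_pi_pos _
    (integrable_gaussianPDFReal_mul μ _ hgm hC) fun θ => ?_
  exact ((summable_gaussianPDFReal_add_zsmul hv' μ θ two_pi_pos.ne').mul_right (g θ)).congr
    fun k => by rw [hg.zsmul k θ]

theorem setIntegral_fWN_mul (hv : 0 < v) (μ : ℝ) (hg : Function.Periodic g (2 * π))
    (hgm : AEStronglyMeasurable g) {C : ℝ} (hC : ∀ x, |g x| ≤ C) :
    ∫ θ in Ioc (-π) π, fWN μ v θ * g θ = ∫ x, g x ∂gaussianReal μ v.toNNReal := by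
  have hv' : v.toNNReal ≠ 0 := by simpa using hv
  simp only [fWN_mul_eq_tsum hv.le _ _ hg, Ioc_neg_pi_pi_eq]
  rw [integral_Ioc_tsum_comp_add_zsmul two_pi_pos _ (integrable_gaussianPDFReal_mul μ _ hgm hC),
    integral_gaussianReal_eq_integral_smul hv']
  rfl

theorem setIntegral_tsum_mul_fWN_mul {w : ℤ → ℝ} (hw : Summable w)
    (m : ℤ → ℝ) (hv : 0 < v) (hg : Function.Periodic g (2 * π))
    (hgm : AEStronglyMeasurable g) {C : ℝ} (hC : ∀ x, |g x| ≤ C) :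
    ∫ θ in Ioc (-π) π, (∑' j, w j * fWN (m j) v θ) * g θ =
      ∑' j, w j * ∫ x, g x ∂gaussianReal (m j) v.toNNReal := by
  have hint (j : ℤ) : IntegrableOn (fun θ => w j * (fWN (m j) v θ * g θ)) (Ioc (-π) π) :=
    (integrableOn_fWN_mul hv (m j) hg hgm hC).const_mul (w j)
  have hnorm (j : ℤ) : ∫ θ in Ioc (-π) π, ‖w j * (fWN (m j) v θ * g θ)‖ ≤ |w j| * C := by
    have habs (θ : ℝ) : ‖w j * (fWN (m j) v θ * g θ)‖ = |w j| * (fWN (m j) v θ * |g θ|) := by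
      rw [Real.norm_eq_abs, abs_mul, abs_mul, abs_of_pos (fWN_pos hv _ _)]
    simp_rw [habs]
    rw [integral_const_mul, setIntegral_fWN_mul (g := fun x => |g x|) hv _ (hg.comp abs)
      (continuous_abs.comp_aestronglyMeasurable hgm) fun x => (abs_abs (g x)).le.trans (hC x)]
    exact mul_le_mul_of_nonneg_left ((le_abs_self _).trans
      (abs_integral_le_of_forall_abs_le fun x => (abs_abs (g x)).le.trans (hC x)))
      (abs_nonneg _)
  have hsum : Summable fun j => ∫ θ in Ioc (-π) π, ‖w j * (fWN (m j) v θ * g θ)‖ :=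
    (hw.abs.mul_right C).of_nonneg_of_le (fun j => integral_nonneg fun _ => norm_nonneg _) hnorm
  calc ∫ θ in Ioc (-π) π, (∑' j, w j * fWN (m j) v θ) * g θ
      = ∫ θ in Ioc (-π) π, ∑' j, w j * (fWN (m j) v θ * g θ) := by
        simp_rw [← tsum_mul_right, mul_assoc]
    _ = ∑' j, ∫ θ in Ioc (-π) π, w j * (fWN (m j) v θ * g θ) :=
        (integral_tsum_of_summable_integral_norm hint hsum).symm
    _ = ∑' j, w j * ∫ x, g x ∂gaussianReal (m j) v.toNNReal := tsum_congr fun j => by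
        rw [integral_const_mul, setIntegral_fWN_mul hv _ hg hgm hC]

end WrappedNormal

section WrappedOU

variable {α σ : ℝ}

theorem hasSum_wnWeight (hv : 0 < σ ^ 2 / (2 * α)) (μ θ : ℝ) :
    HasSum (fun k => wnWeight α μ σ k θ) 1 := by
  have hv' : (σ ^ 2 / (2 * α)).toNNReal ≠ 0 := by simpa using hv
  have hs : Summable fun k : ℤ => gaussDens (σ ^ 2 / (2 * α)) (θ - μ + 2 * k * π) :=
    (summable_gaussianPDFReal_add_zsmul hv' μ θ two_pi_pos.ne').congr fun k =>
      (gaussDens_add_two_mul_pi hv.le μ θ k).symm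
  have h : HasSum (fun k => wnWeight α μ σ k θ)
      (fWN μ (σ ^ 2 / (2 * α)) θ / fWN μ (σ ^ 2 / (2 * α)) θ) :=
    hs.hasSum.div_const _
  rwa [div_self (fWN_pos hv μ θ).ne'] at h

lemma wouVar_pos (hα : 0 < α) (hσ : σ ≠ 0) {t : ℝ} (ht : 0 < t) : 0 < wouVar α σ t := by
  have hexp : rexp (-(2 * α * t)) < 1 := Real.exp_lt_one_iff.2 (by nlinarith)
  unfold wouVar
  exact div_pos (mul_pos (by positivity) (by linarith)) (by positivity)

lemma tendsto_wouMean (μ : ℝ) (m : ℤ) (θs : ℝ) :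
    Tendsto (fun t => wouMean α μ t m θs) (𝓝 0) (𝓝 (θs + m * (2 * π))) := by
  have h := ((by unfold wouMean; fun_prop : Continuous fun t => wouMean α μ t m θs).tendsto 0)
  convert h using 2
  simp only [wouMean, mul_zero, neg_zero, exp_zero, one_mul]
  ring

lemma tendsto_wouVar_toNNReal :
    Tendsto (fun t => (wouVar α σ t).toNNReal) (𝓝 0) (𝓝 0) := by
  have h := ((by unfold wouVar; fun_prop : Continuous fun t => (wouVar α σ t).toNNReal).tendsto 0)
  simpa [wouVar] using h

end WrappedOU

/-- Point-mass limit: the WOU conditional density concentrates at `θ_s` as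
`t → 0⁺`, tested against bounded continuous `2π`-periodic functions. -/
theorem pWOU_tendsto_point_mass (α μ σ : ℝ) (hα : 0 < α) (hσ : 0 < σ)
    (θs : ℝ) (g : ℝ → ℝ) (hg_cont : Continuous g)
    (hg_bdd : ∃ C : ℝ, ∀ x : ℝ, |g x| ≤ C)
    (hg_per : ∀ x : ℝ, g (x + 2 * Real.pi) = g x) :
    Filter.Tendsto (fun t : ℝ => ∫ θ in (-Real.pi)..Real.pi, pWOU α μ σ t θ θs * g θ)
      (nhdsWithin 0 (Set.Ioi 0)) (nhds (g θs)) := by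
  obtain ⟨C, hC⟩ := hg_bdd
  have hper : Function.Periodic g (2 * π) := hg_per
  have hw := hasSum_wnWeight (by positivity : 0 < σ ^ 2 / (2 * α)) μ θs
  have hmix : ∀ᶠ t in 𝓝[>] 0, ∑' m : ℤ, wnWeight α μ σ m θs *
      ∫ x, g x ∂gaussianReal (wouMean α μ t m θs) (wouVar α σ t).toNNReal =
      ∫ θ in (-π)..π, pWOU α μ σ t θ θs * g θ := by
    filter_upwards [self_mem_nhdsWithin] with t ht
    rw [intervalIntegral.integral_of_le (by linarith [pi_pos])]
    exact (setIntegral_tsum_mul_fWN_mul hw.summable _ (wouVar_pos hα hσ.ne' ht) hper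
      hg_cont.aestronglyMeasurable hC).symm
  have hlim (m : ℤ) : Tendsto (fun t => ∫ x, g x ∂gaussianReal (wouMean α μ t m θs)
      (wouVar α σ t).toNNReal) (𝓝[>] 0) (𝓝 (g θs)) := by
    simpa only [hper.int_mul m θs] using tendsto_integral_gaussianReal
      ((tendsto_wouMean μ m θs).mono_left nhdsWithin_le_nhds)
      (tendsto_wouVar_toNNReal.mono_left nhdsWithin_le_nhds) hg_cont hC
  have hbound : ∀ t (m : ℤ), ‖wnWeight α μ σ m θs *
      ∫ x, g x ∂gaussianReal (wouMean α μ t m θs) (wouVar α σ t).toNNReal‖ ≤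
      |wnWeight α μ σ m θs| * C := fun t m => by
    rw [Real.norm_eq_abs, abs_mul]
    exact mul_le_mul_of_nonneg_left (abs_integral_le_of_forall_abs_le hC) (abs_nonneg _)
  have hsum := tendsto_tsum_of_dominated_convergence (hw.summable.abs.mul_right C)
    (fun m => (hlim m).const_mul (wnWeight α μ σ m θs)) (Eventually.of_forall hbound)
  rw [tsum_mul_right, hw.tsum_eq, one_mul] at hsum
  exact hsum.congr' hmix
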